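/- arXiv:2512.05447 — 3 statements merged into one kernel-verified Lean document; each statement's English description precedes it below -/
import Mathlib

section
/- Let J : ℝ^n → ℝ be differentiable with L-Lipschitz gradient and bounded above by J_max, let (θ_t)_{t≥1} be generated by θ_{t+1} = θ_t + η_t g_t where ‖g_t‖ ≤ G and g_tᵀ ∇J(θ_t) ≥ ‖∇J(θ_t)‖² - ε_t with ε_t ≥ 0. Then for all T ≥ 2: Σ_{t=1}^{T-1} η_t ‖∇J(θ_t)‖² ≤ J_max - J(θ_1) + Σ_{t=1}^{T-1} η_t ε_t + (L G²/2) Σ_{t=1}^{T-1} η_t². -/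
open Finset

section LipschitzGradient

variable {E : Type*} [NormedAddCommGroup E] [InnerProductSpace ℝ E] [CompleteSpace E]
  {J : E → ℝ} {L : ℝ}

/- The lower half of the descent lemma. With `ψ s = J (x + s • v) - s ⟪∇J x, v⟫ + L s² ‖v‖² / 2`,
the Lipschitz bound gives `ψ' s = ⟪∇J (x + s • v) - ∇J x, v⟫ + L s ‖v‖² ≥ 0` for `s ≥ 0`,
so `ψ 0 ≤ ψ 1`. -/
theorem image_add_ge_of_lipschitz_gradient (hJ : Differentiable ℝ J)
    (hLip : ∀ x y, ‖gradient J x - gradient J y‖ ≤ L * ‖x - y‖) (x v : E) :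
    J x + inner ℝ (gradient J x) v - L / 2 * ‖v‖ ^ 2 ≤ J (x + v) := by
  set ψ : ℝ → ℝ := fun s => J (x + s • v) - s * inner ℝ (gradient J x) v + L / 2 * s ^ 2 * ‖v‖ ^ 2
  have hψ : ∀ s, HasDerivAt ψ
      (inner ℝ (gradient J (x + s • v)) v - inner ℝ (gradient J x) v + L * s * ‖v‖ ^ 2) s := by
    intro s
    have hline : HasDerivAt (fun s : ℝ => x + s • v) v s := by
      simpa using ((hasDerivAt_id s).smul_const v).const_add x
    have hJline := (hJ (x + s • v)).hasGradientAt.hasFDerivAt.comp_hasDerivAt s hline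
    refine ((hJline.sub ((hasDerivAt_id s).mul_const (inner ℝ (gradient J x) v))).add
      (((hasDerivAt_pow 2 s).const_mul (L / 2)).mul_const (‖v‖ ^ 2))).congr_deriv ?_
    rw [InnerProductSpace.toDual_apply_apply]
    push_cast
    ring
  have hψ' : ∀ s ∈ interior (Set.Ici (0 : ℝ)), 0 ≤ deriv ψ s := by
    intro s hs
    rw [interior_Ici, Set.mem_Ioi] at hs
    rw [(hψ s).deriv, ← inner_sub_left]
    have hbound : |inner ℝ (gradient J (x + s • v) - gradient J x) v| ≤ L * s * ‖v‖ ^ 2 :=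
      calc |inner ℝ (gradient J (x + s • v) - gradient J x) v|
          ≤ ‖gradient J (x + s • v) - gradient J x‖ * ‖v‖ := abs_real_inner_le_norm _ _
        _ ≤ L * ‖s • v‖ * ‖v‖ := by
          gcongr
          simpa using hLip (x + s • v) x
        _ = L * s * ‖v‖ ^ 2 := by rw [norm_smul, Real.norm_of_nonneg hs.le]; ring
    linarith [neg_abs_le (inner ℝ (gradient J (x + s • v) - gradient J x) v)]
  have hmono := monotoneOn_of_deriv_nonneg (convex_Ici 0)
    (fun s _ => (hψ s).continuousAt.continuousWithinAt)
    (fun s _ => (hψ s).differentiableAt.differentiableWithinAt) hψ'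
  have := hmono (Set.self_mem_Ici) (show (1 : ℝ) ∈ Set.Ici 0 by norm_num) zero_le_one
  simp only [ψ, zero_smul, one_smul, add_zero, zero_mul, one_mul, sub_zero, one_pow] at this
  linarith

theorem mul_norm_gradient_sq_le_of_step (hJ : Differentiable ℝ J)
    (hLip : ∀ x y, ‖gradient J x - gradient J y‖ ≤ L * ‖x - y‖) (hL : 0 ≤ L)
    {x g : E} {η ε G : ℝ} (hη : 0 ≤ η) (hg : ‖g‖ ≤ G)
    (hdir : ‖gradient J x‖ ^ 2 - ε ≤ inner ℝ g (gradient J x)) :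
    η * ‖gradient J x‖ ^ 2 ≤ J (x + η • g) - J x + η * ε + L * G ^ 2 / 2 * η ^ 2 := by
  have hdesc := image_add_ge_of_lipschitz_gradient hJ hLip x (η • g)
  have hinner : inner ℝ (gradient J x) (η • g) = η * inner ℝ g (gradient J x) := by
    rw [real_inner_smul_right, real_inner_comm]
  have hnorm : L / 2 * ‖η • g‖ ^ 2 ≤ L * G ^ 2 / 2 * η ^ 2 := by
    rw [norm_smul, Real.norm_of_nonneg hη]
    calc L / 2 * (η * ‖g‖) ^ 2 ≤ L / 2 * (η * G) ^ 2 := by gcongr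
      _ = L * G ^ 2 / 2 * η ^ 2 := by ring
  linarith [mul_le_mul_of_nonneg_left hdir hη]

end LipschitzGradient

theorem stmt_8_general (n : ℕ) (L G Jmax : ℝ) (hL : 0 < L)
    (J : EuclideanSpace ℝ (Fin n) → ℝ) (hJ : Differentiable ℝ J)
    (hLip : ∀ x y, ‖gradient J x - gradient J y‖ ≤ L * ‖x - y‖)
    (hmax : ∀ x, J x ≤ Jmax)
    (θ g : ℕ → EuclideanSpace ℝ (Fin n)) (η ε : ℕ → ℝ)
    (hη : ∀ t, 0 < η t)
    (hupd : ∀ t, θ (t + 1) = θ t + η t • g t)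
    (hgnorm : ∀ t, ‖g t‖ ≤ G)
    (hgdir : ∀ t, inner ℝ (g t) (gradient J (θ t)) ≥ (‖gradient J (θ t)‖ : ℝ) ^ 2 - ε t) :
    ∀ T : ℕ, 2 ≤ T →
      ∑ t ∈ Finset.Icc 1 (T - 1), η t * ‖gradient J (θ t)‖ ^ 2 ≤
        Jmax - J (θ 1) + (∑ t ∈ Finset.Icc 1 (T - 1), η t * ε t) +
          (L * G ^ 2 / 2) * ∑ t ∈ Finset.Icc 1 (T - 1), η t ^ 2 := by
  intro T hT
  have hIcc : Icc 1 (T - 1) = Ico 1 T := by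
    ext t
    simp only [mem_Icc, mem_Ico]
    omega
  have hstep : ∀ t, η t * ‖gradient J (θ t)‖ ^ 2 ≤
      J (θ (t + 1)) - J (θ t) + η t * ε t + L * G ^ 2 / 2 * η t ^ 2 := fun t => by
    rw [hupd t]
    exact mul_norm_gradient_sq_le_of_step hJ hLip hL.le (hη t).le (hgnorm t) (hgdir t)
  rw [hIcc]
  calc ∑ t ∈ Ico 1 T, η t * ‖gradient J (θ t)‖ ^ 2
      ≤ ∑ t ∈ Ico 1 T, (J (θ (t + 1)) - J (θ t) + η t * ε t + L * G ^ 2 / 2 * η t ^ 2) :=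
        sum_le_sum fun t _ => hstep t
    _ = J (θ T) - J (θ 1) + ∑ t ∈ Ico 1 T, η t * ε t + L * G ^ 2 / 2 * ∑ t ∈ Ico 1 T, η t ^ 2 := by
        rw [sum_add_distrib, sum_add_distrib, ← mul_sum, sum_Ico_sub (fun t => J (θ t)) (by omega)]
    _ ≤ Jmax - J (θ 1) + ∑ t ∈ Ico 1 T, η t * ε t + L * G ^ 2 / 2 * ∑ t ∈ Ico 1 T, η t ^ 2 := by
        linarith [hmax (θ T)]

/-- For `J` differentiable with `L`-Lipschitz gradient and bounded above by
`Jmax`, iterates `θ_{t+1} = θ_t + η_t g_t` with `‖g_t‖ ≤ G`,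
`⟪g_t, ∇J(θ_t)⟫ ≥ ‖∇J(θ_t)‖² - ε_t` and `ε_t ≥ 0` satisfy, for all `T ≥ 2`,
`Σ_{t=1}^{T-1} η_t ‖∇J(θ_t)‖² ≤ Jmax - J(θ_1) + Σ_{t=1}^{T-1} η_t ε_t + (L G²/2) Σ_{t=1}^{T-1} η_t²`. -/
theorem stmt_8 (n : ℕ) (L G Jmax : ℝ) (hL : 0 < L) (hG : 0 < G)
    (J : EuclideanSpace ℝ (Fin n) → ℝ) (hJ : Differentiable ℝ J)
    (hLip : ∀ x y, ‖gradient J x - gradient J y‖ ≤ L * ‖x - y‖)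
    (hmax : ∀ x, J x ≤ Jmax)
    (θ g : ℕ → EuclideanSpace ℝ (Fin n)) (η ε : ℕ → ℝ)
    (hη : ∀ t, 0 < η t) (hε : ∀ t, 0 ≤ ε t)
    (hupd : ∀ t, θ (t + 1) = θ t + η t • g t)
    (hgnorm : ∀ t, ‖g t‖ ≤ G)
    (hgdir : ∀ t, inner ℝ (g t) (gradient J (θ t)) ≥ (‖gradient J (θ t)‖ : ℝ) ^ 2 - ε t) :
    ∀ T : ℕ, 2 ≤ T →
      ∑ t ∈ Finset.Icc 1 (T - 1), η t * ‖gradient J (θ t)‖ ^ 2 ≤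
        Jmax - J (θ 1) + (∑ t ∈ Finset.Icc 1 (T - 1), η t * ε t) +
          (L * G ^ 2 / 2) * ∑ t ∈ Finset.Icc 1 (T - 1), η t ^ 2 :=
  stmt_8_general n L G Jmax hL J hJ hLip hmax θ g η ε hη hupd hgnorm hgdir
end

section
/- Let W be a column-stochastic N×N matrix with positive diagonal entries associated with a strongly connected graph, and suppose there exist M₁ > 0, λ ∈ (0,1) and stochastic vectors φ_t such that |(W^{t-k+1})_{ij} - (φ_t)_i| ≤ M₁ λ^{t-k} for all t ≥ k ≥ 0 and all i,j. Let δ_k ∈ ℝ^N with ‖δ_k‖ ≤ D/(k-1) for k ≥ 2 and some D > 0. Then for every i, ‖Σ_{k=2}^{t} (W^{t+1-k} - φ_t 𝟙ᵀ) δ_k‖ ≤ M₁ √N D Σ_{k=2}^{t} λ^{t-k}/(k-1) = O((log t)/t). -/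
section Aux

/-- ℓ¹–ℓ² comparison in Euclidean space. -/
lemma aux_l1_le_sqrt_l2 (N : ℕ) (x : EuclideanSpace ℝ (Fin N)) :
    ∑ j, |x j| ≤ Real.sqrt N * ‖x‖ := by
  have h1 : (∑ j, |x j|) ^ 2 ≤ (N : ℝ) * ∑ j, |x j| ^ 2 := by
    simpa using sq_sum_le_card_mul_sum_sq (s := (Finset.univ : Finset (Fin N)))
      (f := fun j => |x j|)
  have h2 : ‖x‖ = Real.sqrt (∑ j, |x j| ^ 2) := by
    simp [EuclideanSpace.norm_eq, Real.norm_eq_abs]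
  calc ∑ j, |x j| = Real.sqrt ((∑ j, |x j|) ^ 2) :=
        (Real.sqrt_sq (by positivity)).symm
    _ ≤ Real.sqrt ((N : ℝ) * ∑ j, |x j| ^ 2) := Real.sqrt_le_sqrt h1
    _ = Real.sqrt N * ‖x‖ := by
        rw [Real.sqrt_mul (by positivity), h2]

/-- `(m+1) l^m ≤ 1/(1-l)` rearranged. -/
lemma aux_pow_le (l : ℝ) (hl0 : 0 < l) (hl1 : l < 1) (m : ℕ) :
    l ^ m ≤ (1 / (1 - l)) / ((m : ℝ) + 1) := by
  have h1l : (0 : ℝ) < 1 - l := by linarith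
  have hg : ∑ j ∈ Finset.range (m + 1), l ^ j ≤ 1 / (1 - l) := by
    have he : ∑ j ∈ Finset.range (m + 1), l ^ j = (1 - l ^ (m + 1)) / (1 - l) := by
      rw [geom_sum_eq (ne_of_lt hl1)]
      rw [div_eq_div_iff (by linarith) (by linarith)]
      ring
    rw [he]
    have hp : 0 ≤ l ^ (m + 1) := by positivity
    apply div_le_div_of_nonneg_right _ h1l.le |>.trans_eq rfl
    linarith
  have h1 : ((m : ℝ) + 1) * l ^ m ≤ ∑ j ∈ Finset.range (m + 1), l ^ j := by
    have : ∀ j ∈ Finset.range (m + 1), l ^ m ≤ l ^ j := by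
      intro j hj
      exact pow_le_pow_of_le_one (le_of_lt hl0) (le_of_lt hl1)
        (by simpa using Nat.lt_succ_iff.mp (Finset.mem_range.mp hj))
    calc ((m : ℝ) + 1) * l ^ m = ∑ _j ∈ Finset.range (m + 1), l ^ m := by
          rw [Finset.sum_const, Finset.card_range]; push_cast; ring
      _ ≤ _ := Finset.sum_le_sum this
  rw [le_div_iff₀ (by positivity)]
  calc l ^ m * ((m : ℝ) + 1) = ((m : ℝ) + 1) * l ^ m := by ring
    _ ≤ _ := h1.trans hg

/-- Two harmonic-style sums over `Icc 2 t`. -/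
lemma aux_sum_inv_left (t : ℕ) (ht : 2 ≤ t) :
    ∑ k ∈ Finset.Icc 2 t, 1 / ((k : ℝ) - 1) = ∑ i ∈ Finset.range (t - 1), 1 / ((i : ℝ) + 1) := by
  refine Finset.sum_nbij' (fun k => k - 2) (fun i => i + 2) ?_ ?_ ?_ ?_ ?_
  · intro k hk; simp only [Finset.mem_Icc] at hk; simp only [Finset.mem_range]; omega
  · intro i hi; simp only [Finset.mem_range] at hi; simp only [Finset.mem_Icc]; omega
  · intro k hk; simp only [Finset.mem_Icc] at hk; show k - 2 + 2 = k; omega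
  · intro i hi; simp only [Finset.mem_range] at hi; show i + 2 - 2 = i; omega
  · intro k hk
    simp only [Finset.mem_Icc] at hk
    show 1 / ((k : ℝ) - 1) = 1 / (((k - 2 : ℕ) : ℝ) + 1)
    rw [Nat.cast_sub hk.1]
    push_cast
    ring_nf

lemma aux_sum_inv_right (t : ℕ) (ht : 2 ≤ t) :
    ∑ k ∈ Finset.Icc 2 t, 1 / ((t : ℝ) - (k : ℝ) + 1)
      = ∑ i ∈ Finset.range (t - 1), 1 / ((i : ℝ) + 1) := by
  refine Finset.sum_nbij' (fun k => t - k) (fun i => t - i) ?_ ?_ ?_ ?_ ?_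
  · intro k hk; simp only [Finset.mem_Icc] at hk; simp only [Finset.mem_range]; omega
  · intro i hi; simp only [Finset.mem_range] at hi; simp only [Finset.mem_Icc]; omega
  · intro k hk; simp only [Finset.mem_Icc] at hk; show t - (t - k) = k; omega
  · intro i hi; simp only [Finset.mem_range] at hi; show t - (t - i) = i; omega
  · intro k hk
    simp only [Finset.mem_Icc] at hk
    show 1 / ((t : ℝ) - (k : ℝ) + 1) = 1 / (((t - k : ℕ) : ℝ) + 1)
    rw [Nat.cast_sub hk.2]

/-- Chebyshev-type sum bound: `∑_{k=2}^t l^{t-k}/(k-1) ≤ 2(1+log t)/((1-l) t)`. -/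
lemma aux_sum_bound (l : ℝ) (hl0 : 0 < l) (hl1 : l < 1) (t : ℕ) (ht : 2 ≤ t) :
    ∑ k ∈ Finset.Icc 2 t, l ^ (t - k) / ((k : ℝ) - 1)
      ≤ (2 / (1 - l)) * (1 + Real.log t) / t := by
  have ht0 : (0 : ℝ) < t := by positivity
  have hterm : ∀ k ∈ Finset.Icc 2 t,
      l ^ (t - k) / ((k : ℝ) - 1)
        ≤ (1 / (1 - l)) * (1 / (t : ℝ)) * (1 / ((k : ℝ) - 1) + 1 / ((t : ℝ) - k + 1)) := by
    intro k hk
    simp only [Finset.mem_Icc] at hk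
    have hk1 : (1 : ℝ) ≤ (k : ℝ) := by exact_mod_cast Nat.one_le_iff_ne_zero.mpr (by omega)
    have hkx : (0 : ℝ) < (k : ℝ) - 1 := by
      have : (2 : ℝ) ≤ (k : ℝ) := by exact_mod_cast hk.1
      linarith
    have hky : (0 : ℝ) < (t : ℝ) - k + 1 := by
      have : (k : ℝ) ≤ (t : ℝ) := by exact_mod_cast hk.2
      linarith
    have hcast : ((t - k : ℕ) : ℝ) = (t : ℝ) - (k : ℝ) := by
      push_cast [Nat.cast_sub hk.2]; ring
    have h1 : l ^ (t - k) ≤ (1 / (1 - l)) / ((t : ℝ) - k + 1) := by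
      have := aux_pow_le l hl0 hl1 (t - k)
      rwa [hcast] at this
    have h2 : l ^ (t - k) / ((k : ℝ) - 1)
        ≤ (1 / (1 - l)) / ((t : ℝ) - k + 1) / ((k : ℝ) - 1) :=
      div_le_div_of_nonneg_right h1 hkx.le |>.trans_eq rfl
    refine h2.trans_eq ?_
    have hx : ((k : ℝ) - 1) ≠ 0 := ne_of_gt hkx
    have hy : ((t : ℝ) - k + 1) ≠ 0 := ne_of_gt hky
    have ht' : (t : ℝ) ≠ 0 := ne_of_gt ht0
    have hl' : (1 - l) ≠ 0 := by linarith
    field_simp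
    ring
  have h := Finset.sum_le_sum hterm
  rw [← Finset.mul_sum, Finset.sum_add_distrib, aux_sum_inv_left t ht, aux_sum_inv_right t ht]
  at h
  have hH : ∑ i ∈ Finset.range (t - 1), 1 / ((i : ℝ) + 1) ≤ 1 + Real.log t := by
    have h1 : ((harmonic (t - 1) : ℚ) : ℝ) = ∑ i ∈ Finset.range (t - 1), 1 / ((i : ℝ) + 1) := by
      rw [harmonic]; push_cast; simp [one_div]
    have h2 := harmonic_le_one_add_log (t - 1)
    have h3 : Real.log (t - 1 : ℕ) ≤ Real.log t := by
      apply Real.log_le_log (by exact_mod_cast Nat.sub_pos_of_lt (by omega) : (0:ℝ) < (t-1:ℕ))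
      exact_mod_cast Nat.sub_le t 1
    rw [h1] at h2; linarith
  have hlog : 0 ≤ Real.log t := Real.log_nonneg (by exact_mod_cast ht.trans' (by norm_num))
  have hfac : (0 : ℝ) ≤ 1 / (1 - l) * (1 / (t : ℝ)) := by
    have : (0:ℝ) < 1 - l := by linarith
    positivity
  calc ∑ k ∈ Finset.Icc 2 t, l ^ (t - k) / ((k : ℝ) - 1)
      ≤ 1 / (1 - l) * (1 / (t : ℝ)) *
          (∑ i ∈ Finset.range (t - 1), 1 / ((i : ℝ) + 1)
            + ∑ i ∈ Finset.range (t - 1), 1 / ((i : ℝ) + 1)) := h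
    _ ≤ 1 / (1 - l) * (1 / (t : ℝ)) * ((1 + Real.log t) + (1 + Real.log t)) := by
        apply mul_le_mul_of_nonneg_left _ hfac
        linarith
    _ = (2 / (1 - l)) * (1 + Real.log t) / t := by field_simp; ring

end Aux

/-- For a column-stochastic matrix `W` with positive diagonal on a strongly
connected graph satisfying the geometric ergodicity bound
`|(W^{t-k+1})_{ij} - (φ_t)_i| ≤ M₁ λ^{t-k}`, and perturbations `δ_k` with
`‖δ_k‖ ≤ D/(k-1)`, each coordinate of `Σ_{k=2}^t (W^{t+1-k} - φ_t 𝟙ᵀ) δ_k` is bounded by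
`M₁ √N D Σ_{k=2}^t λ^{t-k}/(k-1)`, which is `O((log t)/t)`. -/
theorem stmt_13 (N : ℕ) (hN : 0 < N) (W : Matrix (Fin N) (Fin N) ℝ)
    (hWnonneg : ∀ i j, 0 ≤ W i j)
    (hWcol : ∀ j, ∑ i, W i j = 1)
    (hWdiag : ∀ i, 0 < W i i)
    (hconn : ∀ i j : Fin N, ∃ m : ℕ, 0 < (W ^ m) i j)
    (M₁ l D : ℝ) (hM₁ : 0 < M₁) (hl : l ∈ Set.Ioo (0:ℝ) 1) (hD : 0 < D)
    (φ : ℕ → Fin N → ℝ)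
    (hφnonneg : ∀ t i, 0 ≤ φ t i) (hφsum : ∀ t, ∑ i, φ t i = 1)
    (happrox : ∀ t k : ℕ, k ≤ t → ∀ i j, |(W ^ (t - k + 1)) i j - φ t i| ≤ M₁ * l ^ (t - k))
    (δ : ℕ → EuclideanSpace ℝ (Fin N))
    (hδ : ∀ k : ℕ, 2 ≤ k → ‖δ k‖ ≤ D / ((k : ℝ) - 1)) :
    (∀ t : ℕ, 2 ≤ t → ∀ i : Fin N,
      |∑ k ∈ Finset.Icc 2 t, ∑ j, ((W ^ (t + 1 - k)) i j - φ t i) * δ k j| ≤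
        M₁ * Real.sqrt N * D * ∑ k ∈ Finset.Icc 2 t, l ^ (t - k) / ((k : ℝ) - 1)) ∧
    (∃ C : ℝ, 0 < C ∧ ∀ t : ℕ, 2 ≤ t → ∀ i : Fin N,
      |∑ k ∈ Finset.Icc 2 t, ∑ j, ((W ^ (t + 1 - k)) i j - φ t i) * δ k j| ≤
        C * Real.log t / t) := by
  obtain ⟨hl0, hl1⟩ := hl
  have hsqrtN : (0 : ℝ) < Real.sqrt N := Real.sqrt_pos.mpr (by exact_mod_cast hN)
  -- part 1
  have part1 : ∀ t : ℕ, 2 ≤ t → ∀ i : Fin N,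
      |∑ k ∈ Finset.Icc 2 t, ∑ j, ((W ^ (t + 1 - k)) i j - φ t i) * δ k j| ≤
        M₁ * Real.sqrt N * D * ∑ k ∈ Finset.Icc 2 t, l ^ (t - k) / ((k : ℝ) - 1) := by
    intro t ht i
    have key : ∀ k ∈ Finset.Icc 2 t,
        |∑ j, ((W ^ (t + 1 - k)) i j - φ t i) * δ k j|
          ≤ M₁ * Real.sqrt N * D * (l ^ (t - k) / ((k : ℝ) - 1)) := by
      intro k hk
      simp only [Finset.mem_Icc] at hk
      have hkx : (0 : ℝ) < (k : ℝ) - 1 := by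
        have : (2 : ℝ) ≤ (k : ℝ) := by exact_mod_cast hk.1
        linarith
      have hidx : t + 1 - k = t - k + 1 := by omega
      have hA : ∀ j, |(W ^ (t + 1 - k)) i j - φ t i| ≤ M₁ * l ^ (t - k) := by
        intro j; rw [hidx]; exact happrox t k hk.2 i j
      calc |∑ j, ((W ^ (t + 1 - k)) i j - φ t i) * δ k j|
          ≤ ∑ j, |((W ^ (t + 1 - k)) i j - φ t i) * δ k j| :=
            Finset.abs_sum_le_sum_abs _ _
        _ ≤ ∑ j, M₁ * l ^ (t - k) * |δ k j| := by
            apply Finset.sum_le_sum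
            intro j _
            rw [abs_mul]
            exact mul_le_mul_of_nonneg_right (hA j) (abs_nonneg _)
        _ = M₁ * l ^ (t - k) * ∑ j, |δ k j| := by rw [Finset.mul_sum]
        _ ≤ M₁ * l ^ (t - k) * (Real.sqrt N * ‖δ k‖) := by
            apply mul_le_mul_of_nonneg_left (aux_l1_le_sqrt_l2 N (δ k))
            positivity
        _ ≤ M₁ * l ^ (t - k) * (Real.sqrt N * (D / ((k : ℝ) - 1))) := by
            apply mul_le_mul_of_nonneg_left _ (by positivity)
            exact mul_le_mul_of_nonneg_left (hδ k hk.1) (le_of_lt hsqrtN)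
        _ = M₁ * Real.sqrt N * D * (l ^ (t - k) / ((k : ℝ) - 1)) := by ring
    calc |∑ k ∈ Finset.Icc 2 t, ∑ j, ((W ^ (t + 1 - k)) i j - φ t i) * δ k j|
        ≤ ∑ k ∈ Finset.Icc 2 t, |∑ j, ((W ^ (t + 1 - k)) i j - φ t i) * δ k j| :=
          Finset.abs_sum_le_sum_abs _ _
      _ ≤ ∑ k ∈ Finset.Icc 2 t, M₁ * Real.sqrt N * D * (l ^ (t - k) / ((k : ℝ) - 1)) :=
          Finset.sum_le_sum key
      _ = M₁ * Real.sqrt N * D * ∑ k ∈ Finset.Icc 2 t, l ^ (t - k) / ((k : ℝ) - 1) := by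
          rw [Finset.mul_sum]
  refine ⟨part1, ?_⟩
  -- part 2
  have hlog2 : (0 : ℝ) < Real.log 2 := Real.log_pos (by norm_num)
  have h1l : (0 : ℝ) < 1 - l := by linarith
  refine ⟨M₁ * Real.sqrt N * D * ((2 / (1 - l)) * (1 + 1 / Real.log 2)), by positivity, ?_⟩
  intro t ht i
  have ht2 : (2 : ℝ) ≤ (t : ℝ) := by exact_mod_cast ht
  have ht0 : (0 : ℝ) < t := by linarith
  have hlogt : Real.log 2 ≤ Real.log t := Real.log_le_log (by norm_num) ht2
  have hlogt0 : (0 : ℝ) < Real.log t := lt_of_lt_of_le hlog2 hlogt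
  have hone : (1 : ℝ) ≤ Real.log t / Real.log 2 := (one_le_div hlog2).mpr hlogt
  have hstep : (1 : ℝ) + Real.log t ≤ (1 + 1 / Real.log 2) * Real.log t := by
    have : (1 : ℝ) ≤ (1 / Real.log 2) * Real.log t := by
      rw [one_div, inv_mul_eq_div]; exact hone
    linarith
  have hS := aux_sum_bound l hl0 hl1 t ht
  calc |∑ k ∈ Finset.Icc 2 t, ∑ j, ((W ^ (t + 1 - k)) i j - φ t i) * δ k j|
      ≤ M₁ * Real.sqrt N * D * ∑ k ∈ Finset.Icc 2 t, l ^ (t - k) / ((k : ℝ) - 1) :=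
        part1 t ht i
    _ ≤ M₁ * Real.sqrt N * D * ((2 / (1 - l)) * (1 + Real.log t) / t) := by
        apply mul_le_mul_of_nonneg_left hS (by positivity)
    _ ≤ M₁ * Real.sqrt N * D * ((2 / (1 - l)) * ((1 + 1 / Real.log 2) * Real.log t) / t) := by
        apply mul_le_mul_of_nonneg_left _ (by positivity)
        apply div_le_div_of_nonneg_right _ ht0.le
        apply mul_le_mul_of_nonneg_left hstep (by positivity)
    _ = M₁ * Real.sqrt N * D * ((2 / (1 - l)) * (1 + 1 / Real.log 2)) * Real.log t / t := by
        ring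
end

section
/- Let γ ∈ (0,1) and let T₁, T₂ be independent random variables with P(T₁ = t) = (1-γ)γ^t and P(T₂ = τ) = (1-√γ)(√γ)^τ for t, τ ∈ ℕ. Let f : ℕ × ℕ → ℝ be bounded. Then E[ Σ_{τ=0}^{T₂} γ^{τ/2} f(T₁, τ) ] = (1-γ) Σ_{t=0}^∞ γ^t Σ_{τ=0}^∞ γ^τ f(t, τ). -/
open Finset

/-! Writing `s = √γ`, the inner expectation over `T₂` is an Abel-type identity:
`∑ₙ (1 - s) sⁿ ∑_{k ≤ n} aₖ = ∑ₖ sᵏ aₖ`, which is the Cauchy product of `∑ₖ sᵏ aₖ` with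
`∑ₘ sᵐ = (1 - s)⁻¹`. Taking `aₖ = sᵏ f(t, k)` turns the weights into `s²ᵏ = γᵏ`, and the
outer expectation over `T₁` is then a plain weighted sum, the double sum being absolutely
convergent because `f` is bounded. -/

lemma tsum_geometric_mul_sum_range {r : ℝ} (hr0 : 0 ≤ r) (hr1 : r < 1) {a : ℕ → ℝ}
    (ha : Summable fun k => r ^ k * a k) :
    ∑' n, (1 - r) * r ^ n * ∑ k ∈ range (n + 1), a k = ∑' k, r ^ k * a k := by
  have hgeom : Summable fun m => ‖r ^ m‖ := by
    simpa [abs_of_nonneg hr0] using summable_geometric_of_lt_one hr0 hr1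
  have hcauchy := tsum_mul_tsum_eq_tsum_sum_range_of_summable_norm ha.norm hgeom
  have hterm : ∀ n, ∑ k ∈ range (n + 1), r ^ k * a k * r ^ (n - k)
      = r ^ n * ∑ k ∈ range (n + 1), a k := by
    intro n
    rw [mul_sum]
    refine sum_congr rfl fun k hk => ?_
    rw [← pow_mul_pow_sub r (Nat.lt_succ_iff.mp (mem_range.mp hk))]
    ring
  simp only [hterm, tsum_geometric_of_lt_one hr0 hr1] at hcauchy
  simp only [mul_assoc, tsum_mul_left, ← hcauchy]
  field_simp [(sub_pos.mpr hr1).ne']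

lemma abs_sum_range_pow_mul_le {r C : ℝ} (hr0 : 0 ≤ r) (hr1 : r < 1) {a : ℕ → ℝ}
    (ha : ∀ k, |a k| ≤ C) (n : ℕ) :
    |∑ k ∈ range n, r ^ k * a k| ≤ C / (1 - r) := by
  have hC : 0 ≤ C := (abs_nonneg _).trans (ha 0)
  calc |∑ k ∈ range n, r ^ k * a k|
      ≤ ∑ k ∈ range n, r ^ k * C := by
        refine (abs_sum_le_sum_abs _ _).trans (sum_le_sum fun k _ => ?_)
        rw [abs_mul, abs_of_nonneg (pow_nonneg hr0 k)]
        exact mul_le_mul_of_nonneg_left (ha k) (pow_nonneg hr0 k)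
    _ = (∑ k ∈ Ico 0 n, r ^ k) * C := by rw [sum_mul, range_eq_Ico]
    _ ≤ r ^ 0 / (1 - r) * C := mul_le_mul_of_nonneg_right (geom_sum_Ico_le_of_lt_one hr0 hr1) hC
    _ = C / (1 - r) := by ring

lemma summable_pow_mul_of_abs_le {r C : ℝ} (hr0 : 0 ≤ r) (hr1 : r < 1) {a : ℕ → ℝ}
    (ha : ∀ k, |a k| ≤ C) : Summable fun k => r ^ k * a k :=
  Summable.of_norm_bounded ((summable_geometric_of_lt_one hr0 hr1).mul_right C) fun k => by
    rw [Real.norm_eq_abs, abs_mul, abs_of_nonneg (pow_nonneg hr0 k)]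
    exact mul_le_mul_of_nonneg_left (ha k) (pow_nonneg hr0 k)

lemma summable_geometric_mul_geometric_mul_sum_range {q r C : ℝ} (hq0 : 0 ≤ q) (hq1 : q < 1)
    (hr0 : 0 ≤ r) (hr1 : r < 1) {f : ℕ → ℕ → ℝ} (hf : ∀ t k, |f t k| ≤ C) :
    Summable fun p : ℕ × ℕ => ((1 - q) * q ^ p.1) * ((1 - r) * r ^ p.2) *
      ∑ k ∈ range (p.2 + 1), r ^ k * f p.1 k := by
  have hC : 0 ≤ C := (abs_nonneg _).trans (hf 0 0)
  have hw : ∀ t : ℕ, 0 ≤ (1 - q) * q ^ t := fun t => mul_nonneg (by linarith) (pow_nonneg hq0 t)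
  have hv : ∀ n : ℕ, 0 ≤ (1 - r) * r ^ n := fun n => mul_nonneg (by linarith) (pow_nonneg hr0 n)
  have hmajorant : Summable fun p : ℕ × ℕ => ((1 - q) * q ^ p.1) * (C * r ^ p.2) :=
    ((summable_geometric_of_lt_one hq0 hq1).mul_left _).mul_of_nonneg
      ((summable_geometric_of_lt_one hr0 hr1).mul_left _) hw
      fun n => mul_nonneg hC (pow_nonneg hr0 n)
  refine hmajorant.of_norm_bounded fun ⟨t, n⟩ => ?_
  have h1r : 0 < 1 - r := sub_pos.mpr hr1
  rw [Real.norm_eq_abs, abs_mul, abs_of_nonneg (mul_nonneg (hw t) (hv n))]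
  calc _ ≤ (1 - q) * q ^ t * ((1 - r) * r ^ n) * (C / (1 - r)) :=
        mul_le_mul_of_nonneg_left (abs_sum_range_pow_mul_le hr0 hr1 (hf t) (n + 1))
          (mul_nonneg (hw t) (hv n))
    _ = _ := by field_simp

theorem stmt_16_general (γ : ℝ) (hγ : γ ∈ Set.Ioo (0:ℝ) 1)
    (f : ℕ → ℕ → ℝ) (C : ℝ) (hf : ∀ t τ, |f t τ| ≤ C) :
    ∑' p : ℕ × ℕ,
        ((1 - γ) * γ ^ p.1) * ((1 - Real.sqrt γ) * (Real.sqrt γ) ^ p.2) *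
          (∑ τ ∈ Finset.range (p.2 + 1), (Real.sqrt γ) ^ τ * f p.1 τ) =
      (1 - γ) * ∑' t : ℕ, γ ^ t * ∑' τ : ℕ, γ ^ τ * f t τ := by
  obtain ⟨hγ0, hγ1⟩ := hγ
  set s := Real.sqrt γ
  have hs0 : 0 ≤ s := Real.sqrt_nonneg γ
  have hs1 : s < 1 := (Real.sqrt_lt' one_pos).mpr (by linarith)
  have hsq : ∀ k : ℕ, s ^ k * s ^ k = γ ^ k := fun k => by
    rw [← mul_pow, Real.mul_self_sqrt hγ0.le]
  have hinner : ∀ t, Summable fun k => s ^ k * (s ^ k * f t k) := fun t => by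
    simpa only [← mul_assoc, hsq] using summable_pow_mul_of_abs_le hγ0.le hγ1 (hf t)
  rw [(summable_geometric_mul_geometric_mul_sum_range hγ0.le hγ1 hs0 hs1 hf).tsum_prod,
    ← tsum_mul_left]
  refine tsum_congr fun t => ?_
  calc ∑' n, (1 - γ) * γ ^ t * ((1 - s) * s ^ n) * ∑ τ ∈ range (n + 1), s ^ τ * f t τ
      = (1 - γ) * γ ^ t * ∑' n, (1 - s) * s ^ n * ∑ τ ∈ range (n + 1), s ^ τ * f t τ := by
        simp only [mul_assoc, tsum_mul_left]
    _ = (1 - γ) * (γ ^ t * ∑' k, γ ^ k * f t k) := by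
        simp only [tsum_geometric_mul_sum_range hs0 hs1 (hinner t), ← mul_assoc, hsq]

/-- For independent `T₁ ~ Geom(1-γ)` and `T₂ ~ Geom(1-√γ)` on ℕ and
bounded `f : ℕ × ℕ → ℝ`,
`E[Σ_{τ=0}^{T₂} γ^{τ/2} f(T₁,τ)] = (1-γ) Σ_t γ^t Σ_τ γ^τ f(t,τ)`. -/
theorem stmt_16 (γ : ℝ) (hγ : γ ∈ Set.Ioo (0:ℝ) 1)
    (f : ℕ → ℕ → ℝ) (C : ℝ) (hC : 0 < C) (hf : ∀ t τ, |f t τ| ≤ C) :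
    ∑' p : ℕ × ℕ,
        ((1 - γ) * γ ^ p.1) * ((1 - Real.sqrt γ) * (Real.sqrt γ) ^ p.2) *
          (∑ τ ∈ Finset.range (p.2 + 1), (Real.sqrt γ) ^ τ * f p.1 τ) =
      (1 - γ) * ∑' t : ℕ, γ ^ t * ∑' τ : ℕ, γ ^ τ * f t τ :=
  stmt_16_general γ hγ f C hf
end
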